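/- arXiv:2410.22546 — 3 statements merged into one kernel-verified Lean document; each statement's English description precedes it below -/
import Mathlib

section
/- Let k be an infinite field and let p ∈ k[x, y, z] vanish at every point of the union of the three coordinate axes in k³ (i.e. p(t,0,0) = p(0,t,0) = p(0,0,t) = 0 for all t ∈ k). Then p lies in the ideal generated by xy, yz, and zx. -/
/-!
A monomial ideal contains exactly the polynomials all of whose monomials are divisible by one
of its generators. A monomial divisible by no `xᵢxⱼ` with `i ≠ j` is a pure power `xᵢⁿ`, and
the coefficient of `xᵢⁿ` in `p` is the `n`-th coefficient of the one-variable polynomial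
`p(t eᵢ)`. That polynomial vanishes at every point of the infinite field `k`, so it is zero.
-/

open MvPolynomial

theorem Finsupp.single_one_add_single_one_le {σ : Type*} {m : σ →₀ ℕ} {i j : σ}
    (hij : i ≠ j) (hi : m i ≠ 0) (hj : m j ≠ 0) : single i 1 + single j 1 ≤ m := by
  classical
  intro l
  simp only [Finsupp.coe_add, Pi.add_apply, Finsupp.single_apply]
  split_ifs <;> grind

namespace MvPolynomial

variable {R σ : Type*} [DecidableEq σ]

theorem coeff_aeval_piSingle_X [CommSemiring R] (i : σ) (n : ℕ) (p : MvPolynomial σ R) :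
    (aeval (Pi.single i Polynomial.X) p).coeff n = p.coeff (Finsupp.single i n) := by
  induction p using MvPolynomial.induction_on' with
  | add p q hp hq => rw [map_add, Polynomial.coeff_add, hp, hq, coeff_add]
  | monomial m c =>
    rw [aeval_monomial, coeff_monomial]
    by_cases hm : m = Finsupp.single i (m i)
    · rw [hm, Finsupp.prod_single_index (by rw [pow_zero]), Pi.single_eq_same,
        Polynomial.algebraMap_eq, Polynomial.coeff_C_mul_X_pow]
      simp only [(Finsupp.single_injective i).eq_iff, eq_comm]
    · obtain ⟨j, hj, hji⟩ : ∃ j ∈ m.support, j ≠ i := by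
        by_contra! h
        exact hm (Finsupp.support_subset_singleton.mp fun j hj => Finset.mem_singleton.mpr (h j hj))
      have hprod :
          (m.prod fun j e => Pi.single (M := fun _ => Polynomial R) i Polynomial.X j ^ e) = 0 :=
        Finset.prod_eq_zero hj (by
          beta_reduce
          rw [Pi.single_eq_of_ne hji, zero_pow (Finsupp.mem_support_iff.mp hj)])
      rw [hprod, mul_zero, Polynomial.coeff_zero, if_neg]
      rintro rfl
      exact hm (by simp)

theorem eval_aeval_piSingle_X [CommRing R] (i : σ) (t : R) (p : MvPolynomial σ R) :
    (aeval (Pi.single i Polynomial.X) p).eval t = eval (Pi.single i t) p := by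
  rw [← Polynomial.coe_aeval_eq_eval, comp_aeval_apply, aeval_eq_eval]
  congr 2
  funext j
  rw [Pi.apply_single (fun _ q => Polynomial.aeval t q) (fun _ => map_zero _), Polynomial.aeval_X]

theorem coeff_single_eq_zero_of_eval_piSingle_eq_zero [CommRing R] [IsDomain R] [Infinite R]
    {p : MvPolynomial σ R} {i : σ} (h : ∀ t : R, eval (Pi.single i t) p = 0) (n : ℕ) :
    p.coeff (Finsupp.single i n) = 0 := by
  have hrestrict : aeval (Pi.single i Polynomial.X) p = 0 :=
    Polynomial.funext fun t => by rw [eval_aeval_piSingle_X, h, Polynomial.eval_zero]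
  rw [← coeff_aeval_piSingle_X, hrestrict, Polynomial.coeff_zero]

theorem mem_span_X_mul_X_of_eval_piSingle_eq_zero [CommRing R] [IsDomain R] [Infinite R]
    [Nonempty σ] {p : MvPolynomial σ R} (h : ∀ (i : σ) (t : R), eval (Pi.single i t) p = 0) :
    p ∈ Ideal.span {q : MvPolynomial σ R | ∃ i j, i ≠ j ∧ q = X i * X j} := by
  have hgen : (fun s : σ →₀ ℕ => monomial s (1 : R)) ''
      {s | ∃ i j, i ≠ j ∧ s = Finsupp.single i 1 + Finsupp.single j 1} ⊆
      {q | ∃ i j, i ≠ j ∧ q = X i * X j} := by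
    rintro _ ⟨_, ⟨i, j, hij, rfl⟩, rfl⟩
    exact ⟨i, j, hij, by rw [X, X, monomial_mul, one_mul]⟩
  refine Ideal.span_mono hgen (mem_ideal_span_monomial_image.mpr fun m hm => ?_)
  by_contra! hnot_dvd
  have hcard : m.support.card ≤ 1 := Finset.card_le_one.mpr fun i hi j hj => by
    by_contra hij
    exact hnot_dvd _ ⟨i, j, hij, rfl⟩ (Finsupp.single_one_add_single_one_le hij
      (Finsupp.mem_support_iff.mp hi) (Finsupp.mem_support_iff.mp hj))
  obtain ⟨i, n, rfl⟩ := Finsupp.card_support_le_one'.mp hcard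
  exact mem_support_iff.mp hm (coeff_single_eq_zero_of_eval_piSingle_eq_zero (h i) n)

end MvPolynomial

theorem stmt2 {k : Type*} [Field k] [Infinite k] (p : MvPolynomial (Fin 3) k)
    (h1 : ∀ t : k, MvPolynomial.eval ![t, 0, 0] p = 0)
    (h2 : ∀ t : k, MvPolynomial.eval ![0, t, 0] p = 0)
    (h3 : ∀ t : k, MvPolynomial.eval ![0, 0, t] p = 0) :
    p ∈ Ideal.span ({MvPolynomial.X 0 * MvPolynomial.X 1,
                     MvPolynomial.X 1 * MvPolynomial.X 2,
                     MvPolynomial.X 2 * MvPolynomial.X 0} :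
      Set (MvPolynomial (Fin 3) k)) := by
  have haxes : ∀ (i : Fin 3) (t : k), eval (Pi.single i t) p = 0 := by
    intro i t
    fin_cases i
    · convert h1 t using 3; funext j; fin_cases j <;> rfl
    · convert h2 t using 3; funext j; fin_cases j <;> rfl
    · convert h3 t using 3; funext j; fin_cases j <;> rfl
  refine Ideal.span_mono ?_ (mem_span_X_mul_X_of_eval_piSingle_eq_zero haxes)
  rintro _ ⟨i, j, hij, rfl⟩
  fin_cases i <;> fin_cases j <;> simp at hij ⊢ <;> grind
end

section
/- There is no polynomial p ∈ ℝ[x, y] such that p(a, b) = (a − b) · min(a, b) for all real a, b ≥ 0. -/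
theorem stmt5 :
    ¬ ∃ p : MvPolynomial (Fin 2) ℝ, ∀ a b : ℝ, 0 ≤ a → 0 ≤ b →
      MvPolynomial.eval ![a, b] p = (a - b) * min a b := by
  rintro ⟨p, hp⟩
  -- restrict to b = 1
  set q : Polynomial ℝ := MvPolynomial.aeval ![Polynomial.X, Polynomial.C 1] p with hq
  have hev : ∀ a : ℝ, q.eval a = MvPolynomial.eval ![a, 1] p := by
    intro a
    show (Polynomial.evalRingHom a) q = _
    rw [hq, MvPolynomial.aeval_def, MvPolynomial.eval₂_comp_left (Polynomial.evalRingHom a)]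
    rw [MvPolynomial.eval]
    congr 1
    · ext r; simp
    · ext i; fin_cases i <;> simp
  have hzero : q - (Polynomial.X - Polynomial.C 1) = 0 := by
    apply Polynomial.eq_zero_of_infinite_isRoot
    refine Set.Infinite.mono ?_ (Set.Ici_infinite (1:ℝ))
    intro a ha
    simp only [Set.mem_Ici] at ha
    have h01 : (0:ℝ) ≤ 1 := by norm_num
    have := hp a 1 (le_trans h01 ha) h01
    simp only [Set.mem_setOf_eq, Polynomial.IsRoot, Polynomial.eval_sub,
      Polynomial.eval_X, Polynomial.eval_C, hev]
    rw [this, min_eq_right ha]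
    ring
  have h0 := hp 0 1 le_rfl (by norm_num)
  have := hev 0
  have hq0 : q.eval 0 = -1 := by
    have : q = Polynomial.X - Polynomial.C 1 := by linear_combination (norm := ring_nf) hzero
    simp [this]
  rw [hev 0, h0] at hq0
  norm_num at hq0
end

section
/- The family of functions f_{a,b} : ℝ_{≥0}² → ℝ, f_{a,b}(x, y) = min(a·x, b·y), indexed by pairs of positive integers (a, b) with gcd(a, b) = 1, is linearly independent over ℚ: any finite ℚ-linear combination of distinct such functions that is identically zero on ℝ_{≥0}² has all coefficients zero. -/
/-!
On the line `y = 1` the function `min (a x) (b y)` becomes `a • min x (b / a)`, a function with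
a single kink at `x = b / a`, and coprimality makes the kink points of distinct pairs distinct.
A second difference `f (t - h) + f (t + h) - 2 f t` with `h` small enough detects the kink at `t`
and vanishes on every function whose kink is at distance at least `h` from `t`, so it isolates
one coefficient of any vanishing linear combination.
-/

open Filter Topology Set

def secondDiff (f : ℝ → ℝ) (t h : ℝ) : ℝ := f (t - h) + f (t + h) - 2 * f t

lemma secondDiff_sum_mul {ι : Type*} (s : Finset ι) (c : ι → ℝ) (f : ι → ℝ → ℝ)
    (t h : ℝ) :
    secondDiff (fun x => ∑ i ∈ s, c i * f i x) t h =
      ∑ i ∈ s, c i * secondDiff (f i) t h := by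
  simp only [secondDiff, Finset.mul_sum, ← Finset.sum_add_distrib, ← Finset.sum_sub_distrib]
  exact Finset.sum_congr rfl fun i _ => by ring

lemma secondDiff_min_of_le_abs {r t h : ℝ} (h0 : 0 ≤ h) (hh : h ≤ |r - t|) :
    secondDiff (fun x => min x r) t h = 0 := by
  rcases le_abs'.mp hh with hr | hr
  · simp only [secondDiff, min_eq_right (by linarith : r ≤ t - h),
      min_eq_right (by linarith : r ≤ t), min_eq_right (by linarith : r ≤ t + h)]
    ring
  · simp only [secondDiff, min_eq_left (by linarith : t - h ≤ r),
      min_eq_left (by linarith : t ≤ r), min_eq_left (by linarith : t + h ≤ r)]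
    ring

lemma secondDiff_min_self {t h : ℝ} (h0 : 0 ≤ h) :
    secondDiff (fun x => min x t) t h = -h := by
  simp only [secondDiff, min_eq_left (by linarith : t - h ≤ t), min_self,
    min_eq_right (by linarith : t ≤ t + h)]
  ring

theorem linearIndependent_min_of_range_mem_nhds {X : Type*} (g : X → ℝ) {S : Set ℝ}
    (hS : ∀ r ∈ S, range g ∈ 𝓝 r) :
    LinearIndependent ℝ (fun r : S => fun x => min (g x) (r : ℝ)) := by
  rw [linearIndependent_iff']
  intro s c hsum r₀ hr₀
  set F : ℝ → ℝ := fun t => ∑ r ∈ s, c r * min t r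
  have hF : ∀ t ∈ range g, F t = 0 := by
    rintro _ ⟨x, rfl⟩
    simpa [F] using congrFun hsum x
  set t : ℝ := (r₀ : ℝ)
  have hnear : ∀ᶠ h in 𝓝 (0 : ℝ),
      t - h ∈ range g ∧ t + h ∈ range g ∧ ∀ r ∈ s.erase r₀, h < |(r : ℝ) - t| := by
    have hsub : Tendsto (fun h => t - h) (𝓝 0) (𝓝 t) := by
      simpa using tendsto_const_nhds.sub (tendsto_id (x := 𝓝 (0 : ℝ)))
    have hadd : Tendsto (fun h => t + h) (𝓝 0) (𝓝 t) := by
      simpa using tendsto_const_nhds.add (tendsto_id (x := 𝓝 (0 : ℝ)))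
    refine (hsub.eventually (hS t r₀.2)).and <| (hadd.eventually (hS t r₀.2)).and <|
      (eventually_all_finset _).mpr fun r hr => eventually_lt_nhds ?_
    exact abs_pos.mpr (sub_ne_zero.mpr (Subtype.coe_injective.ne (Finset.ne_of_mem_erase hr)))
  obtain ⟨h, ⟨hsub, hadd, hfar⟩, hpos : 0 < h⟩ :=
    ((hnear.filter_mono nhdsWithin_le_nhds).and (self_mem_nhdsWithin (s := Ioi 0))).exists
  have hzero : secondDiff F t h = 0 := by
    simp only [secondDiff, hF _ hsub, hF _ hadd, hF t (mem_of_mem_nhds (hS t r₀.2))]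
    ring
  have hsingle : secondDiff F t h = c r₀ * -h := by
    rw [secondDiff_sum_mul, Finset.sum_eq_single_of_mem r₀ hr₀, secondDiff_min_self hpos.le]
    intro r hr hne
    rw [secondDiff_min_of_le_abs hpos.le (hfar r (Finset.mem_erase.mpr ⟨hne, hr⟩)).le, mul_zero]
  have : c r₀ * h = 0 := by linarith
  exact (mul_eq_zero.mp this).resolve_right hpos.ne'

lemma eq_of_natCast_div_eq_of_coprime {K : Type*} [Field K] [CharZero K] {a b c d : ℕ}
    (ha : 0 < a) (hc : 0 < c) (hab : Nat.Coprime a b) (hcd : Nat.Coprime c d)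
    (h : (b : K) / a = d / c) : a = c ∧ b = d := by
  have hℚ : ((b : ℤ) : ℚ) / (a : ℤ) = ((d : ℤ) : ℚ) / (c : ℤ) := by
    apply Rat.cast_injective (α := K)
    push_cast
    exact h
  have := Rat.div_int_inj (by exact_mod_cast ha) (by exact_mod_cast hc)
    (by simpa using hab.symm) (by simpa using hcd.symm) hℚ
  omega

theorem stmt6 :
    LinearIndependent ℚ
      (fun q : {q : ℕ × ℕ // 0 < q.1 ∧ 0 < q.2 ∧ Nat.gcd q.1 q.2 = 1} =>
        (fun p : {x : ℝ // 0 ≤ x} × {x : ℝ // 0 ≤ x} =>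
            min ((q.1.1 : ℝ) * (p.1 : ℝ)) ((q.1.2 : ℝ) * (p.2 : ℝ)) :
          {x : ℝ // 0 ≤ x} × {x : ℝ // 0 ≤ x} → ℝ)) := by
  set ι := {q : ℕ × ℕ // 0 < q.1 ∧ 0 < q.2 ∧ Nat.gcd q.1 q.2 = 1}
  have hkinks : LinearIndependent ℝ
      (fun r : Ioi (0 : ℝ) => fun x : {x : ℝ // 0 ≤ x} => min (x : ℝ) r) :=
    linearIndependent_min_of_range_mem_nhds _ fun r hr => by
      rw [Subtype.range_coe_subtype]; exact Ici_mem_nhds hr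
  let slope : ι → Ioi (0 : ℝ) := fun q =>
    ⟨(q.1.2 : ℝ) / q.1.1,
      mem_Ioi.mpr (div_pos (Nat.cast_pos.mpr q.2.2.1) (Nat.cast_pos.mpr q.2.1))⟩
  have hslope : Function.Injective slope := fun q q' hq =>
    have := eq_of_natCast_div_eq_of_coprime q.2.1 q'.2.1 q.2.2.2 q'.2.2.2 (congrArg Subtype.val hq)
    Subtype.ext (Prod.ext this.1 this.2)
  let scale : ι → ℝˣ := fun q => Units.mk0 (q.1.1 : ℝ) (by exact_mod_cast q.2.1.ne')
  refine LinearIndependent.of_comp (LinearMap.funLeft ℚ ℝ fun x => (x, ⟨1, zero_le_one⟩)) ?_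
  convert ((hkinks.comp slope hslope).units_smul scale).restrict_scalars' ℚ using 1
  funext q x
  have ha : (0 : ℝ) < q.1.1 := by exact_mod_cast q.2.1
  simp only [Function.comp_apply, LinearMap.funLeft_apply, Pi.smul_apply', Units.smul_def,
    Pi.smul_apply, smul_eq_mul, scale, slope, Units.val_mk0, mul_min_of_nonneg _ _ ha.le, mul_one,
    mul_div_cancel₀ _ ha.ne']
end
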